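/- Let m > 1/2, set s = √(4m² − 1), fix θ₁ ∈ (0, π), and define on (0, π) the function g(θ) = √((2m − sin 2θ₁)/(2m − sin 2θ)) · exp( −(1/s)·[ arccot((2m·cot θ − 1)/s) − arccot((2m·cot θ₁ − 1)/s) ] ), where arccot : ℝ → (0, π) is the inverse of cot restricted to (0, π). Then g(θ₁) = 1 and, for all θ ∈ (0, π), g′(θ)/g(θ) = −sin²θ / (m − sin θ·cos θ). -/

import Mathlib

/-- `arccot : ℝ → (0, π)`, the inverse of `cot` restricted to `(0, π)`. -/
noncomputable def arccot (x : ℝ) : ℝ := Real.pi / 2 - Real.arctan x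

/-! Writing `u = (2m cot θ - 1)/s`, one has `s² sin²θ (1 + u²) = 4m (m - sin θ cos θ)`, so the
exponential factor has logarithmic derivative `-1 / (2 (m - sin θ cos θ))`, while the square-root
factor has logarithmic derivative `cos 2θ / (2m - sin 2θ) = cos 2θ / (2 (m - sin θ cos θ))`.
Their sum is `(cos 2θ - 1) / (2 (m - sin θ cos θ)) = -sin²θ / (m - sin θ cos θ)`. -/

open Real

lemma hasDerivAt_cot {x : ℝ} (hx : sin x ≠ 0) : HasDerivAt cot (-(sin x ^ 2)⁻¹) x := by
  have hcot : cot = fun y => cos y / sin y := funext cot_eq_cos_div_sin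
  rw [hcot]
  refine ((hasDerivAt_cos x).div (hasDerivAt_sin x) hx).congr_deriv ?_
  field_simp
  linear_combination -sin_sq_add_cos_sq x

lemma hasDerivAt_arccot (x : ℝ) : HasDerivAt arccot (-(1 + x ^ 2)⁻¹) x := by
  rw [← one_div]
  exact (hasDerivAt_arctan x).const_sub (π / 2)

lemma sin_mul_cos_le_half (x : ℝ) : sin x * cos x ≤ 1 / 2 := by
  nlinarith [sq_nonneg (sin x - cos x), sin_sq_add_cos_sq x]

lemma sin_two_mul_eq_two_mul_sin_mul_cos (x : ℝ) : sin (2 * x) = 2 * (sin x * cos x) := by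
  rw [sin_two_mul]; ring

lemma HasDerivAt.mul_of_logDeriv {f h : ℝ → ℝ} {a b x : ℝ} (hf : HasDerivAt f (f x * a) x)
    (hh : HasDerivAt h (h x * b) x) :
    HasDerivAt (fun y => f y * h y) (f x * h x * (a + b)) x :=
  (hf.mul hh).congr_deriv (by ring)

lemma HasDerivAt.sqrt_const_div {f : ℝ → ℝ} {f' x A : ℝ} (hf : HasDerivAt f f' x) (hA : 0 < A)
    (hfx : 0 < f x) :
    HasDerivAt (fun y => √(A / f y)) (√(A / f x) * (-f' / (2 * f x))) x := by
  refine (((hasDerivAt_const x A).div hf hfx.ne').sqrt (div_pos hA hfx).ne').congr_deriv ?_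
  have hsq : √(A / f x) ^ 2 = A / f x := sq_sqrt (div_pos hA hfx).le
  show (0 * f x - A * f') / f x ^ 2 / (2 * √(A / f x)) = _
  field_simp
  rw [hsq]
  field_simp
  ring

lemma hasDerivAt_arccot_cot {m s θ : ℝ} (hm : m ≠ 0) (hs : s ≠ 0) (hs2 : s ^ 2 = 4 * m ^ 2 - 1)
    (hθ : sin θ ≠ 0) (hP : m - sin θ * cos θ ≠ 0) :
    HasDerivAt (fun x => arccot ((2 * m * cot x - 1) / s)) (s / (2 * (m - sin θ * cos θ))) θ := by
  have hu := (((hasDerivAt_cot hθ).const_mul (2 * m)).sub_const 1).div_const s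
  refine ((hasDerivAt_arccot _).comp θ hu).congr_deriv ?_
  have hkey : s ^ 2 * sin θ ^ 2 * (1 + ((2 * m * cot θ - 1) / s) ^ 2)
      = 4 * m * (m - sin θ * cos θ) := by
    rw [cot_eq_cos_div_sin]
    field_simp
    linear_combination sin θ ^ 2 * hs2 + 4 * m ^ 2 * sin_sq_add_cos_sq θ
  have hone_add_sq : 1 + ((2 * m * cot θ - 1) / s) ^ 2
      = 4 * m * (m - sin θ * cos θ) / (s ^ 2 * sin θ ^ 2) := by
    rw [← hkey]; field_simp
  rw [hone_add_sq]
  field_simp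
  ring

theorem stmt_15_general (m : ℝ) (hm : 1 / 2 < m) (θ₁ : ℝ)
    (s : ℝ) (hs : s = Real.sqrt (4 * m ^ 2 - 1))
    (g : ℝ → ℝ)
    (hg : ∀ θ : ℝ, g θ =
      Real.sqrt ((2 * m - Real.sin (2 * θ₁)) / (2 * m - Real.sin (2 * θ)))
        * Real.exp (-(1 / s) *
            (arccot ((2 * m * Real.cot θ - 1) / s)
              - arccot ((2 * m * Real.cot θ₁ - 1) / s)))) :
    g θ₁ = 1 ∧
    ∀ θ ∈ Set.Ioo 0 Real.pi,
      deriv g θ / g θ = -Real.sin θ ^ 2 / (m - Real.sin θ * Real.cos θ) := by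
  have hP : ∀ x, 0 < m - sin x * cos x := fun x => by linarith [sin_mul_cos_le_half x]
  have hD : ∀ x, 0 < 2 * m - sin (2 * x) := fun x => by
    rw [sin_two_mul_eq_two_mul_sin_mul_cos]; linarith [hP x]
  have hs0 : 0 < s := hs ▸ sqrt_pos.2 (by nlinarith)
  have hs2 : s ^ 2 = 4 * m ^ 2 - 1 := hs ▸ sq_sqrt (by nlinarith)
  refine ⟨by rw [hg, div_self (hD θ₁).ne', sqrt_one, sub_self, mul_zero, exp_zero, mul_one],
    fun θ hθ => ?_⟩
  have hDder : HasDerivAt (fun x => 2 * m - sin (2 * x)) (-(2 * cos (2 * θ))) θ := by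
    simpa [mul_comm] using ((hasDerivAt_id θ).const_mul 2).sin.const_sub (2 * m)
  have hE := (((hasDerivAt_arccot_cot (by linarith) hs0.ne' hs2
    (sin_pos_of_pos_of_lt_pi hθ.1 hθ.2).ne' (hP θ).ne').sub_const
    (arccot ((2 * m * cot θ₁ - 1) / s))).const_mul (-(1 / s))).exp
  have hG := (hDder.sqrt_const_div (hD θ₁) (hD θ)).mul_of_logDeriv hE
  rw [← funext hg] at hG
  rw [hG.deriv, hg θ, mul_div_cancel_left₀ _
    (mul_pos (sqrt_pos.2 (div_pos (hD θ₁) (hD θ))) (exp_pos _)).ne',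
    sin_two_mul_eq_two_mul_sin_mul_cos, cos_two_mul', ← sin_sq_add_cos_sq θ]
  field_simp
  ring

theorem stmt_15 (m : ℝ) (hm : 1 / 2 < m) (θ₁ : ℝ) (hθ₁ : θ₁ ∈ Set.Ioo 0 Real.pi)
    (s : ℝ) (hs : s = Real.sqrt (4 * m ^ 2 - 1))
    (g : ℝ → ℝ)
    (hg : ∀ θ : ℝ, g θ =
      Real.sqrt ((2 * m - Real.sin (2 * θ₁)) / (2 * m - Real.sin (2 * θ)))
        * Real.exp (-(1 / s) *
            (arccot ((2 * m * Real.cot θ - 1) / s)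
              - arccot ((2 * m * Real.cot θ₁ - 1) / s)))) :
    g θ₁ = 1 ∧
    ∀ θ ∈ Set.Ioo 0 Real.pi,
      deriv g θ / g θ = -Real.sin θ ^ 2 / (m - Real.sin θ * Real.cos θ) :=
  stmt_15_general m hm θ₁ s hs g hg
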